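/- Full loss of a misspecified-prior predictor: under the meta-learning data generating assumptions, let ν be a probability measure on (𝒳^T)^M with ν({h}) > 0 whenever ℙ(H_{M,T} = h) > 0, and for each (m,t) let Q_{m,t}(h) be the ν-conditional law of the next token given the history h (the Bayesian posterior predictive under the alternative joint law ν). Then for every m ∈ {1,…,M}, (1/(MT)) Σ_{m'=1}^{M} Σ_{t=0}^{T−1} E[−ln Q_{m',t}(H_{m',t})(X^{(m')}_{t+1})] = H[H_{M,T} | θ_{1:M}]/(MT) + I[H_{M,T} ; ψ]/(MT) + I[D_m ; θ_m | ψ]/T + d_KL( ℙ-law of H_{M,T} ‖ ν )/(MT). (Paper: the appendix Corollary characterizing the loss of a predictor performing Bayesian inference under an arbitrary prior.) -/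

import Mathlib

open MeasureTheory ProbabilityTheory Real

variable {Ω : Type*} [MeasureSpace Ω]

noncomputable def prob {𝒳 : Type*} (X : Ω → 𝒳) (x : 𝒳) : ℝ :=
  (ℙ (X ⁻¹' {x})).toReal

noncomputable def entropy {𝒳 : Type*} [Fintype 𝒳] (X : Ω → 𝒳) : ℝ :=
  -∑ x, prob X x * Real.log (prob X x)

noncomputable def condEntropy {𝒳 𝒴 : Type*} [Fintype 𝒳] [Fintype 𝒴]
    (X : Ω → 𝒳) (Y : Ω → 𝒴) : ℝ :=
  entropy (fun ω => (X ω, Y ω)) - entropy Y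

noncomputable def mutualInfo {𝒳 𝒴 : Type*} [Fintype 𝒳] [Fintype 𝒴]
    (X : Ω → 𝒳) (Y : Ω → 𝒴) : ℝ :=
  entropy X + entropy Y - entropy (fun ω => (X ω, Y ω))

noncomputable def condMutualInfo {𝒳 𝒴 𝒵 : Type*} [Fintype 𝒳] [Fintype 𝒴] [Fintype 𝒵]
    (X : Ω → 𝒳) (Y : Ω → 𝒴) (Z : Ω → 𝒵) : ℝ :=
  entropy (fun ω => (X ω, Z ω)) + entropy (fun ω => (Y ω, Z ω))
    - entropy (fun ω => (X ω, Y ω, Z ω)) - entropy Z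

def hist {𝒳 : Type*} {T : ℕ} (X : Fin T → Ω → 𝒳) (t : ℕ) (ht : t ≤ T) : Ω → (Fin t → 𝒳) :=
  fun ω i => X (Fin.castLE ht i) ω

/-- Kullback–Leibler divergence (natural log) between two pmfs on a finite type,
given as real-valued functions. -/
noncomputable def klFin {α : Type*} [Fintype α] (p q : α → ℝ) : ℝ :=
  ∑ x, p x * Real.log (p x / q x)

/-!
The average log-loss of the `ν`-predictive telescopes, by the chain rule for `ν`, to
`E[-log ν {H}] = H[H] + d_KL(law H ‖ ν)`, so everything reduces to splitting `H[H]`.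
Given `ψ` the blocks `D_k` are i.i.d., hence `H[H | ψ] = M H[D_m | ψ]`. The condition
`I[D_m ; ψ | θ_m] = 0` (with Gibbs' equality case) makes the conditional kernel of `(θ_k, D_k)`
given `ψ` factor as (law of `θ_k`) × `P(D_m | θ_m = ·)`, so given `θ_{1:M}` the blocks are
independent with laws `P(D_m | θ_m = θ_k)` and `H[H | θ_{1:M}] = M H[D_m | θ_m]`; it also gives
`H[D_m | θ_m, ψ] = H[D_m | θ_m]`. With `I[H ; ψ] = H[H] - H[H | ψ]` these add up to the claim.
-/

section Prob

variable {α β : Type*}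

lemma prob_nonneg (X : Ω → α) (x : α) : 0 ≤ prob X x := ENNReal.toReal_nonneg

lemma prob_comp_of_injective {f : α → β} (hf : f.Injective) (X : Ω → α) (x : α) :
    prob (fun ω => f (X ω)) (f x) = prob X x := by
  simp only [prob, Set.preimage, Set.mem_singleton_iff, hf.eq_iff]

lemma prob_swap (X : Ω → α) (Y : Ω → β) (x : α) (y : β) :
    prob (fun ω => (Y ω, X ω)) (y, x) = prob (fun ω => (X ω, Y ω)) (x, y) :=
  prob_comp_of_injective Prod.swap_injective (fun ω => (X ω, Y ω)) (x, y)

lemma prob_le_prob_comp [IsFiniteMeasure (ℙ : Measure Ω)] (f : α → β) (X : Ω → α) (x : α) :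
    prob X x ≤ prob (fun ω => f (X ω)) (f x) :=
  ENNReal.toReal_mono (measure_ne_top _ _) (measure_mono fun ω (hω : X ω = x) => by
    simp [hω])

variable [IsFiniteMeasure (ℙ : Measure Ω)] [Fintype α] [MeasurableSpace α]
  [MeasurableSingletonClass α] {X : Ω → α}

lemma prob_comp_eq_sum [DecidableEq β] (hX : Measurable X) (f : α → β) (y : β) :
    prob (fun ω => f (X ω)) y = ∑ x with f x = y, prob X x := by
  simp only [prob]
  rw [← ENNReal.toReal_sum fun _ _ => measure_ne_top _ _,
    sum_measure_preimage_singleton _ fun x _ => hX (measurableSet_singleton x)]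
  congr 2
  ext ω
  simp

lemma sum_prob_mul_comp [Fintype β] (hX : Measurable X) (f : α → β) (F : β → ℝ) :
    ∑ x, prob X x * F (f x) = ∑ y, prob (fun ω => f (X ω)) y * F y := by
  classical
  simp_rw [prob_comp_eq_sum hX, Finset.sum_mul]
  rw [← Finset.sum_fiberwise Finset.univ f]
  refine Finset.sum_congr rfl fun y _ => Finset.sum_congr rfl fun x hx => ?_
  rw [(Finset.mem_filter.mp hx).2]

lemma prob_eq_sum_prob_prod [Fintype β] [MeasurableSpace β] [MeasurableSingletonClass β]
    {Y : Ω → β} (hX : Measurable X) (hY : Measurable Y) (y : β) :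
    prob Y y = ∑ x, prob (fun ω => (X ω, Y ω)) (x, y) := by
  classical
  have := sum_prob_mul_comp (hX.prodMk hY) Prod.snd (fun y' => if y' = y then 1 else 0)
  simp only [mul_ite, mul_one, mul_zero, Finset.sum_ite_eq', Finset.mem_univ, if_true,
    Fintype.sum_prod_type] at this
  exact this.symm

lemma integral_comp_eq_sum (hX : Measurable X) (F : α → ℝ) :
    ∫ ω, F (X ω) ∂ℙ = ∑ x, prob X x * F x := by
  rw [← integral_map hX.aemeasurable (measurable_of_finite F).aestronglyMeasurable,
    integral_fintype .of_finite]
  simp [measureReal_def, Measure.map_apply hX (measurableSet_singleton _), prob, mul_comm]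

end Prob

section Entropy

variable {α β γ : Type*}

lemma entropy_eq_sum_negMulLog [Fintype α] (X : Ω → α) :
    entropy X = ∑ x, negMulLog (prob X x) := by
  simp [entropy, negMulLog, Finset.sum_neg_distrib]

/-- `ℙ(X = x | Y = y)`, taken to be `0` when `ℙ(Y = y) = 0`. -/
noncomputable def condPmf (X : Ω → α) (Y : Ω → β) (y : β) (x : α) : ℝ :=
  prob (fun ω => (X ω, Y ω)) (x, y) / prob Y y

variable [IsFiniteMeasure (ℙ : Measure Ω)]

lemma entropy_comp_eq_sum [Fintype α] [MeasurableSpace α] [MeasurableSingletonClass α]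
    [Fintype β] {X : Ω → α} (hX : Measurable X) (f : α → β) :
    entropy (fun ω => f (X ω)) = ∑ x, prob X x * -log (prob (fun ω => f (X ω)) (f x)) := by
  rw [sum_prob_mul_comp hX f fun y => -log (prob (fun ω => f (X ω)) y), entropy]
  simp [Finset.sum_neg_distrib]

lemma entropy_comp_of_injective [Fintype α] [MeasurableSpace α] [MeasurableSingletonClass α]
    [Fintype β] {X : Ω → α} (hX : Measurable X) {f : α → β} (hf : f.Injective) :
    entropy (fun ω => f (X ω)) = entropy X := by
  rw [entropy_comp_eq_sum hX f, entropy]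
  simp [prob_comp_of_injective hf, Finset.sum_neg_distrib]

lemma prob_prod_eq_mul_condPmf (X : Ω → α) (Y : Ω → β) (x : α) (y : β) :
    prob (fun ω => (X ω, Y ω)) (x, y) = prob Y y * condPmf X Y y x := by
  rcases eq_or_ne (prob Y y) 0 with hy | hy
  · rw [hy, zero_mul]
    exact le_antisymm (hy ▸ prob_le_prob_comp Prod.snd _ (x, y)) (prob_nonneg _ _)
  · rw [condPmf, mul_div_cancel₀ _ hy]

variable [Fintype α] [MeasurableSpace α] [MeasurableSingletonClass α]
  [Fintype β] [MeasurableSpace β] [MeasurableSingletonClass β] {X : Ω → α} {Y : Ω → β}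

lemma sum_condPmf (hX : Measurable X) (hY : Measurable Y) {y : β} (hy : prob Y y ≠ 0) :
    ∑ x, condPmf X Y y x = 1 := by
  simp only [condPmf]
  rw [← Finset.sum_div, ← prob_eq_sum_prob_prod hX hY, div_self hy]

theorem condEntropy_eq_sum_condPmf (hX : Measurable X) (hY : Measurable Y) :
    condEntropy X Y = ∑ y, prob Y y * ∑ x, negMulLog (condPmf X Y y x) := by
  have hslice (y : β) : ∑ x, negMulLog (prob (fun ω => (X ω, Y ω)) (x, y))
      = negMulLog (prob Y y) + prob Y y * ∑ x, negMulLog (condPmf X Y y x) := by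
    rcases eq_or_ne (prob Y y) 0 with hy | hy
    · simp [prob_prod_eq_mul_condPmf, hy]
    · simp_rw [prob_prod_eq_mul_condPmf X Y _ y, negMulLog_mul, Finset.sum_add_distrib,
        ← Finset.sum_mul, ← Finset.mul_sum, sum_condPmf hX hY hy, one_mul]
  rw [condEntropy, entropy_eq_sum_negMulLog, entropy_eq_sum_negMulLog,
    Fintype.sum_prod_type_right, Finset.sum_congr rfl fun y _ => hslice y,
    Finset.sum_add_distrib, add_sub_cancel_left]

theorem condEntropy_prod_eq_of_condMutualInfo_eq_zero [Fintype γ] [MeasurableSpace γ]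
    [MeasurableSingletonClass γ] {Z : Ω → γ} (hX : Measurable X) (hY : Measurable Y)
    (hZ : Measurable Z) (h : condMutualInfo X Y Z = 0) :
    condEntropy X (fun ω => (Z ω, Y ω)) = condEntropy X Z := by
  have hZY : entropy (fun ω => (Z ω, Y ω)) = entropy (fun ω => (Y ω, Z ω)) :=
    entropy_comp_of_injective (hY.prodMk hZ) Prod.swap_injective
  have hXZY : entropy (fun ω => (X ω, Z ω, Y ω)) = entropy (fun ω => (X ω, Y ω, Z ω)) :=
    entropy_comp_of_injective (f := fun w : α × β × γ => (w.1, w.2.2, w.2.1))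
      (hX.prodMk (hY.prodMk hZ)) fun _ _ h => by simp_all [Prod.ext_iff]
  rw [condMutualInfo] at h
  rw [condEntropy, condEntropy, hZY, hXZY]
  linarith

end Entropy

section ProductPmf

variable {ι β : Type*} [Fintype ι] [Fintype β]

lemma negMulLog_prod (x : ι → ℝ) : negMulLog (∏ i, x i) = ∑ i, (∏ j, x j) * -log (x i) := by
  by_cases h : ∃ i, x i = 0
  · obtain ⟨i, hi⟩ := h
    simp [Finset.prod_eq_zero (Finset.mem_univ i) hi]
  · push Not at h
    rw [negMulLog, Real.log_prod fun i _ => h i, Finset.mul_sum]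
    simp [Finset.sum_neg_distrib]

lemma sum_prod_mul_apply [DecidableEq ι] (p : ι → β → ℝ) (hp : ∀ i, ∑ b, p i b = 1) (k : ι)
    (G : β → ℝ) : ∑ v : ι → β, (∏ i, p i (v i)) * G (v k) = ∑ b, p k b * G b := by
  have hmul (v : ι → β) :
      (∏ i, p i (v i)) * G (v k) = ∏ i, p i (v i) * if i = k then G (v i) else 1 := by
    rw [Finset.prod_mul_distrib, Fintype.prod_ite_eq']
  have hsum (i : ι) : ∑ b, p i b * (if i = k then G b else 1)
      = if i = k then ∑ b, p k b * G b else 1 := by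
    split_ifs with hi
    · rw [hi]
    · simp [hp i]
  rw [Finset.sum_congr rfl fun v _ => hmul v,
    ← Fintype.prod_sum fun i b => p i b * if i = k then G b else 1]
  simp_rw [hsum, Fintype.prod_ite_eq']

theorem sum_negMulLog_prod [DecidableEq ι] (p : ι → β → ℝ) (hp : ∀ i, ∑ b, p i b = 1) :
    ∑ v : ι → β, negMulLog (∏ i, p i (v i)) = ∑ i, ∑ b, negMulLog (p i b) := by
  simp_rw [negMulLog_prod]
  rw [Finset.sum_comm]
  refine Finset.sum_congr rfl fun k _ => ?_
  rw [sum_prod_mul_apply p hp k fun b => -log (p k b)]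
  simp [negMulLog]

end ProductPmf

theorem condEntropy_eq_sum_of_condPmf_eq_prod [IsFiniteMeasure (ℙ : Measure Ω)]
    {ι σ β : Type*} [Fintype ι] [DecidableEq ι] [Fintype σ] [MeasurableSpace σ]
    [MeasurableSingletonClass σ] [Fintype β] [MeasurableSpace β] [MeasurableSingletonClass β]
    {Y : Ω → ι → β} {S : Ω → σ} (hY : Measurable Y) (hS : Measurable S) (q : ι → σ → β → ℝ)
    (hq : ∀ s, prob S s ≠ 0 → ∀ i, ∑ b, q i s b = 1)
    (hYS : ∀ s, prob S s ≠ 0 → ∀ y, condPmf Y S s y = ∏ i, q i s (y i)) :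
    condEntropy Y S = ∑ s, prob S s * ∑ i, ∑ b, negMulLog (q i s b) := by
  rw [condEntropy_eq_sum_condPmf hY hS]
  refine Finset.sum_congr rfl fun s _ => ?_
  rcases eq_or_ne (prob S s) 0 with hs | hs
  · rw [hs, zero_mul, zero_mul]
  · simp_rw [hYS s hs]
    rw [sum_negMulLog_prod _ (hq s hs)]

open InformationTheory in
theorem eq_of_sum_mul_log_div_eq_zero {ι : Type*} [Fintype ι] {p q : ι → ℝ}
    (hp : ∀ i, 0 ≤ p i) (hq : ∀ i, 0 ≤ q i) (hpq : ∀ i, q i = 0 → p i = 0)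
    (hsum : ∑ i, p i = ∑ i, q i) (h : ∑ i, p i * log (p i / q i) = 0) : p = q := by
  have hkl (i : ι) : q i * klFun (p i / q i) = p i * log (p i / q i) + q i - p i := by
    rcases eq_or_ne (q i) 0 with hqi | hqi
    · simp [hqi, hpq i hqi]
    · rw [klFun]
      field_simp
  have hzero : ∀ i ∈ Finset.univ, q i * klFun (p i / q i) = 0 := by
    refine (Finset.sum_eq_zero_iff_of_nonneg fun i _ =>
      mul_nonneg (hq i) (klFun_nonneg (div_nonneg (hp i) (hq i)))).mp ?_
    simp_rw [hkl, Finset.sum_sub_distrib, Finset.sum_add_distrib, h, hsum]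
    ring
  funext i
  rcases eq_or_ne (q i) 0 with hqi | hqi
  · rw [hqi, hpq i hqi]
  · have := (mul_eq_zero.mp (hzero i (Finset.mem_univ i))).resolve_left hqi
    rwa [klFun_eq_zero_iff (div_nonneg (hp i) (hq i)), div_eq_one_iff_eq hqi] at this

section CondIndep

variable {α β γ : Type*}

noncomputable def condIndepPmf (X : Ω → α) (Y : Ω → β) (Z : Ω → γ) (w : α × β × γ) : ℝ :=
  prob (fun ω => (X ω, Z ω)) (w.1, w.2.2) * prob (fun ω => (Y ω, Z ω)) (w.2.1, w.2.2)
    / prob Z w.2.2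

variable [IsFiniteMeasure (ℙ : Measure Ω)]

lemma condIndepPmf_pos {X : Ω → α} {Y : Ω → β} {Z : Ω → γ} {w : α × β × γ}
    (hw : 0 < prob (fun ω => (X ω, Y ω, Z ω)) w) :
    0 < prob (fun ω => (X ω, Z ω)) (w.1, w.2.2) ∧ 0 < prob (fun ω => (Y ω, Z ω)) (w.2.1, w.2.2)
      ∧ 0 < condIndepPmf X Y Z w := by
  have hxz := hw.trans_le (prob_le_prob_comp (fun w => (w.1, w.2.2)) _ w)
  have hyz := hw.trans_le (prob_le_prob_comp (fun w => (w.2.1, w.2.2)) _ w)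
  have hz := hw.trans_le (prob_le_prob_comp (·.2.2) _ w)
  exact ⟨hxz, hyz, div_pos (mul_pos hxz hyz) hz⟩

variable [Fintype α] [MeasurableSpace α] [MeasurableSingletonClass α]
  [Fintype β] [MeasurableSpace β] [MeasurableSingletonClass β]
  [Fintype γ] [MeasurableSpace γ] [MeasurableSingletonClass γ]
  {X : Ω → α} {Y : Ω → β} {Z : Ω → γ}

theorem condMutualInfo_eq_sum_mul_log_div (hX : Measurable X) (hY : Measurable Y)
    (hZ : Measurable Z) : condMutualInfo X Y Z = ∑ w, prob (fun ω => (X ω, Y ω, Z ω)) w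
      * log (prob (fun ω => (X ω, Y ω, Z ω)) w / condIndepPmf X Y Z w) := by
  set p : α × β × γ → ℝ := prob fun ω => (X ω, Y ω, Z ω)
  have hW : Measurable fun ω => (X ω, Y ω, Z ω) := hX.prodMk (hY.prodMk hZ)
  have hlog (w : α × β × γ) : p w * log (p w / condIndepPmf X Y Z w)
      = p w * -log (prob (fun ω => (X ω, Z ω)) (w.1, w.2.2))
        + p w * -log (prob (fun ω => (Y ω, Z ω)) (w.2.1, w.2.2))
        - p w * -log (p w) - p w * -log (prob Z w.2.2) := by
    have hw0 : 0 ≤ p w := prob_nonneg _ w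
    rcases hw0.eq_or_lt with hw | hw
    · simp [← hw]
    obtain ⟨hxz, hyz, -⟩ := condIndepPmf_pos hw
    have hz := hw.trans_le (prob_le_prob_comp (·.2.2) _ w)
    rw [condIndepPmf, log_div hw.ne' (div_pos (mul_pos hxz hyz) hz).ne',
      log_div (mul_pos hxz hyz).ne' hz.ne', log_mul hxz.ne' hyz.ne']
    ring
  have hXZ : entropy (fun ω => (X ω, Z ω))
      = ∑ w, p w * -log (prob (fun ω => (X ω, Z ω)) (w.1, w.2.2)) :=
    entropy_comp_eq_sum hW fun w => (w.1, w.2.2)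
  have hYZ : entropy (fun ω => (Y ω, Z ω))
      = ∑ w, p w * -log (prob (fun ω => (Y ω, Z ω)) (w.2.1, w.2.2)) :=
    entropy_comp_eq_sum hW fun w => (w.2.1, w.2.2)
  have hZ' : entropy Z = ∑ w, p w * -log (prob Z w.2.2) := entropy_comp_eq_sum hW (·.2.2)
  have hXYZ : entropy (fun ω => (X ω, Y ω, Z ω)) = ∑ w, p w * -log (p w) := by
    simp [entropy, Finset.sum_neg_distrib, p]
  rw [condMutualInfo, hXZ, hYZ, hZ', hXYZ]
  simp_rw [hlog, Finset.sum_sub_distrib, Finset.sum_add_distrib]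

lemma sum_condIndepPmf (hX : Measurable X) (hY : Measurable Y) (hZ : Measurable Z) :
    ∑ w, condIndepPmf X Y Z w = ∑ w, prob (fun ω => (X ω, Y ω, Z ω)) w := by
  have hp : ∑ w, prob (fun ω => (X ω, Y ω, Z ω)) w = ∑ z, prob Z z := by
    simpa using sum_prob_mul_comp (hX.prodMk (hY.prodMk hZ)) (·.2.2) fun _ => 1
  rw [hp, Fintype.sum_prod_type]
  simp_rw [Fintype.sum_prod_type_right]
  rw [Finset.sum_comm]
  refine Finset.sum_congr rfl fun z _ => ?_
  have hfactor : ∑ x, ∑ y, condIndepPmf X Y Z (x, y, z)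
      = (∑ x, prob (fun ω => (X ω, Z ω)) (x, z)) * (∑ y, prob (fun ω => (Y ω, Z ω)) (y, z))
        / prob Z z := by
    simp only [condIndepPmf, Finset.sum_mul_sum, Finset.sum_div]
  rw [hfactor, ← prob_eq_sum_prob_prod hX hZ, ← prob_eq_sum_prob_prod hY hZ, mul_self_div_self]

theorem prob_mul_prob_eq_of_condMutualInfo_eq_zero (hX : Measurable X) (hY : Measurable Y)
    (hZ : Measurable Z) (h : condMutualInfo X Y Z = 0) (x : α) (y : β) (z : γ) :
    prob (fun ω => (X ω, Y ω, Z ω)) (x, y, z) * prob Z z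
      = prob (fun ω => (X ω, Z ω)) (x, z) * prob (fun ω => (Y ω, Z ω)) (y, z) := by
  have hpq : prob (fun ω => (X ω, Y ω, Z ω)) = condIndepPmf X Y Z := by
    refine eq_of_sum_mul_log_div_eq_zero (prob_nonneg _) (fun w => ?_) (fun w hq => ?_)
      (sum_condIndepPmf hX hY hZ).symm ((condMutualInfo_eq_sum_mul_log_div hX hY hZ).symm.trans h)
    · exact div_nonneg (mul_nonneg (prob_nonneg _ _) (prob_nonneg _ _)) (prob_nonneg _ _)
    · by_contra hw
      exact (condIndepPmf_pos ((prob_nonneg _ w).lt_of_ne' hw)).2.2.ne' hq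
  rcases eq_or_ne (prob Z z) 0 with hz | hz
  · have hxz : prob (fun ω => (X ω, Z ω)) (x, z) = 0 :=
      le_antisymm (hz ▸ prob_le_prob_comp Prod.snd _ (x, z)) (prob_nonneg _ _)
    rw [hz, hxz, mul_zero, zero_mul]
  · rw [hpq, condIndepPmf, div_mul_cancel₀ _ hz]

end CondIndep

structure IsCondIID {ι σ β : Type*} [Fintype ι] [Fintype β] (S : Ω → σ) (V : ι → Ω → β)
    (κ : σ → β → ℝ) : Prop where
  sum_kernel (s : σ) : ∑ b, κ s b = 1
  prob_eq (s : σ) (v : ι → β) :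
    prob (fun ω => (S ω, fun i => V i ω)) (s, v) = prob S s * ∏ i, κ s (v i)

namespace IsCondIID

section

variable [IsFiniteMeasure (ℙ : Measure Ω)] {ι σ β γ : Type*} [Fintype ι] [DecidableEq ι]
  [Fintype σ] [MeasurableSpace σ] [MeasurableSingletonClass σ]
  [Fintype β] [MeasurableSpace β] [MeasurableSingletonClass β]
  {S : Ω → σ} {V : ι → Ω → β} {κ : σ → β → ℝ}

lemma prob_prodMk_comp [DecidableEq γ] (h : IsCondIID S V κ) (hS : Measurable S)
    (hV : ∀ i, Measurable (V i)) (f : (ι → β) → γ) (s : σ) (c : γ) :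
    prob (fun ω => (S ω, f fun i => V i ω)) (s, c)
      = prob S s * ∑ v with f v = c, ∏ i, κ s (v i) := by
  classical
  refine (prob_comp_eq_sum (hS.prodMk (measurable_pi_lambda _ hV))
    (fun w => (w.1, f w.2)) (s, c)).trans ?_
  simp [Finset.sum_filter, Fintype.sum_prod_type, ite_and, h.prob_eq, Finset.mul_sum]

lemma map [Fintype γ] [DecidableEq γ] (h : IsCondIID S V κ) (hS : Measurable S)
    (hV : ∀ i, Measurable (V i)) (φ : β → γ) :
    IsCondIID S (fun i ω => φ (V i ω)) fun s c => ∑ b with φ b = c, κ s b where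
  sum_kernel s := by rw [Finset.sum_fiberwise]; exact h.sum_kernel s
  prob_eq s c := by
    refine (h.prob_prodMk_comp hS hV (fun v i => φ (v i)) s c).trans ?_
    rw [Finset.prod_univ_sum]
    congr 2
    ext v
    simp [Fintype.mem_piFinset, funext_iff]

lemma prob_eval (h : IsCondIID S V κ) (hS : Measurable S) (hV : ∀ i, Measurable (V i)) (j : ι)
    (s : σ) (b : β) : prob (fun ω => (S ω, V j ω)) (s, b) = prob S s * κ s b := by
  classical
  refine (h.prob_prodMk_comp hS hV (fun v => v j) s b).trans ?_
  have := sum_prod_mul_apply (fun _ => κ s) (fun _ => h.sum_kernel s) j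
    fun b' => if b' = b then (1 : ℝ) else 0
  simp only [mul_ite, mul_one, mul_zero, Finset.sum_ite_eq', Finset.mem_univ, if_true] at this
  rw [Finset.sum_filter, this]

lemma prob_pi (h : IsCondIID S V κ) (hS : Measurable S) (hV : ∀ i, Measurable (V i))
    (v : ι → β) : prob (fun ω i => V i ω) v = ∑ s, prob S s * ∏ i, κ s (v i) := by
  rw [prob_eq_sum_prob_prod hS (measurable_pi_lambda _ hV)]
  simp_rw [h.prob_eq]

lemma prob_apply (h : IsCondIID S V κ) (hS : Measurable S) (hV : ∀ i, Measurable (V i)) (j : ι)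
    (b : β) : prob (V j) b = ∑ s, prob S s * κ s b := by
  rw [prob_eq_sum_prob_prod hS (hV j)]
  simp_rw [h.prob_eval hS hV j]

lemma prob_apply_ne_zero (h : IsCondIID S V κ) (hS : Measurable S) (hV : ∀ i, Measurable (V i))
    {v : ι → β} (hv : prob (fun ω i => V i ω) v ≠ 0) (i j : ι) : prob (V j) (v i) ≠ 0 := by
  rw [h.prob_apply hS hV j, ← h.prob_apply hS hV i]
  exact ((prob_nonneg _ _).lt_of_ne' hv |>.trans_le (prob_le_prob_comp (· i) _ v)).ne'

theorem condEntropy_pi (h : IsCondIID S V κ) (hS : Measurable S) (hV : ∀ i, Measurable (V i))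
    (j : ι) : condEntropy (fun ω i => V i ω) S = Fintype.card ι * condEntropy (V j) S := by
  have hcond (s : σ) (hs : prob S s ≠ 0) (b : β) : condPmf (V j) S s b = κ s b := by
    rw [condPmf, prob_swap, h.prob_eval hS hV j, mul_div_cancel_left₀ _ hs]
  rw [condEntropy_eq_sum_of_condPmf_eq_prod (measurable_pi_lambda _ hV) hS (fun _ => κ)
      (fun s _ _ => h.sum_kernel s) fun s hs v => by
        rw [condPmf, prob_swap, h.prob_eq, mul_div_cancel_left₀ _ hs],
    condEntropy_eq_sum_condPmf (hV j) hS, Finset.mul_sum]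
  refine Finset.sum_congr rfl fun s _ => ?_
  rcases eq_or_ne (prob S s) 0 with hs | hs
  · simp [hs]
  · simp_rw [hcond s hs, Finset.sum_const, Finset.card_univ, nsmul_eq_mul]
    ring

end

section

variable [IsFiniteMeasure (ℙ : Measure Ω)] {ι σ α β : Type*} [Fintype ι] [DecidableEq ι]
  [Fintype σ] [MeasurableSpace σ] [MeasurableSingletonClass σ]
  [Fintype α] [MeasurableSpace α] [MeasurableSingletonClass α]
  [Fintype β] [MeasurableSpace β] [MeasurableSingletonClass β]
  {S : Ω → σ} {A : ι → Ω → α} {B : ι → Ω → β} {κ : σ → α × β → ℝ}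

lemma fst [DecidableEq α] (h : IsCondIID S (fun i ω => (A i ω, B i ω)) κ) (hS : Measurable S)
    (hA : ∀ i, Measurable (A i)) (hB : ∀ i, Measurable (B i)) :
    IsCondIID S A fun s a => ∑ u with u.1 = a, κ s u :=
  h.map hS (fun i => (hA i).prodMk (hB i)) Prod.fst

lemma kernel_eq_mul_condPmf [DecidableEq α] (h : IsCondIID S (fun i ω => (A i ω, B i ω)) κ)
    (hS : Measurable S) (hA : ∀ i, Measurable (A i)) (hB : ∀ i, Measurable (B i)) {j : ι}
    (hCI : condMutualInfo (B j) S (A j) = 0) {s : σ} (hs : prob S s ≠ 0) {a : α}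
    (ha : prob (A j) a ≠ 0) (b : β) :
    κ s (a, b) = (∑ u with u.1 = a, κ s u) * condPmf (B j) (A j) a b := by
  have hfac := prob_mul_prob_eq_of_condMutualInfo_eq_zero (hB j) hS (hA j) hCI b s a
  have hBSA : prob (fun ω => (B j ω, S ω, A j ω)) (b, s, a) = prob S s * κ s (a, b) := by
    rw [← h.prob_eval hS (fun i => (hA i).prodMk (hB i)) j]
    exact prob_comp_of_injective (f := fun w : σ × α × β => (w.2.2, w.1, w.2.1))
      (fun _ _ hw => by simp_all [Prod.ext_iff]) (fun ω => (S ω, A j ω, B j ω)) (s, a, b)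
  rw [hBSA, (h.fst hS hA hB).prob_eval hS hA j] at hfac
  rw [condPmf, mul_div_assoc', eq_div_iff ha]
  apply mul_left_cancel₀ hs
  linear_combination hfac

lemma condPmf_pi_eq_prod (h : IsCondIID S (fun i ω => (A i ω, B i ω)) κ) (hS : Measurable S)
    (hA : ∀ i, Measurable (A i)) (hB : ∀ i, Measurable (B i)) {j : ι}
    (hCI : condMutualInfo (B j) S (A j) = 0) {a : ι → α} (ha : prob (fun ω i => A i ω) a ≠ 0)
    (b : ι → β) :
    condPmf (fun ω i => B i ω) (fun ω i => A i ω) a b = ∏ i, condPmf (B j) (A j) (a i) (b i) := by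
  classical
  have hAB : prob (fun ω => (fun i => B i ω, fun i => A i ω)) (b, a)
      = ∑ s, prob S s * ∏ i, κ s (a i, b i) := by
    rw [← h.prob_pi hS fun i => (hA i).prodMk (hB i)]
    exact prob_comp_of_injective (f := fun v : ι → α × β => (fun i => (v i).2, fun i => (v i).1))
      (fun _ _ hv => by simp_all [funext_iff, Prod.ext_iff]) (fun ω i => (A i ω, B i ω))
      fun i => (a i, b i)
  rw [condPmf, hAB, div_eq_iff ha, (h.fst hS hA hB).prob_pi hS hA, Finset.mul_sum]
  refine Finset.sum_congr rfl fun s _ => ?_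
  rcases eq_or_ne (prob S s) 0 with hs | hs
  · simp [hs]
  · rw [mul_left_comm, ← Finset.prod_mul_distrib]
    congr 2 with i
    rw [h.kernel_eq_mul_condPmf hS hA hB hCI hs
      ((h.fst hS hA hB).prob_apply_ne_zero hS hA ha i j), mul_comm]

theorem condEntropy_pi_of_condMutualInfo_eq_zero
    (h : IsCondIID S (fun i ω => (A i ω, B i ω)) κ) (hS : Measurable S)
    (hA : ∀ i, Measurable (A i)) (hB : ∀ i, Measurable (B i)) {j : ι}
    (hCI : condMutualInfo (B j) S (A j) = 0) :
    condEntropy (fun ω i => B i ω) (fun ω i => A i ω)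
      = Fintype.card ι * condEntropy (B j) (A j) := by
  classical
  have hA' := h.fst hS hA hB
  have hmarg (i : ι) : ∑ a : ι → α, prob (fun ω i => A i ω) a
      * ∑ b, negMulLog (condPmf (B j) (A j) (a i) b) = condEntropy (B j) (A j) := by
    rw [sum_prob_mul_comp (measurable_pi_lambda (fun ω i => A i ω) hA) (· i)
      fun c => ∑ b, negMulLog (condPmf (B j) (A j) c b), condEntropy_eq_sum_condPmf (hB j) (hA j)]
    simp_rw [hA'.prob_apply hS hA i, hA'.prob_apply hS hA j]
  rw [condEntropy_eq_sum_of_condPmf_eq_prod (measurable_pi_lambda _ hB) (measurable_pi_lambda _ hA)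
      (fun i a b => condPmf (B j) (A j) (a i) b)
      (fun a ha i => sum_condPmf (hB j) (hA j) (hA'.prob_apply_ne_zero hS hA ha i j))
      fun a ha => h.condPmf_pi_eq_prod hS hA hB hCI ha]
  simp_rw [Finset.mul_sum]
  rw [Finset.sum_comm]
  simp [← Finset.mul_sum, hmarg]

theorem entropy_pi_eq (h : IsCondIID S (fun i ω => (A i ω, B i ω)) κ) (hS : Measurable S)
    (hA : ∀ i, Measurable (A i)) (hB : ∀ i, Measurable (B i)) (j : ι)
    (hCI : condMutualInfo (B j) S (A j) = 0) :
    entropy (fun ω i => B i ω) = condEntropy (fun ω i => B i ω) (fun ω i => A i ω)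
      + mutualInfo (fun ω i => B i ω) S + Fintype.card ι * condMutualInfo (B j) (A j) S := by
  classical
  have hBS : condEntropy (fun ω i => B i ω) S = Fintype.card ι * condEntropy (B j) S :=
    (h.map hS (fun i => (hA i).prodMk (hB i)) Prod.snd).condEntropy_pi hS hB j
  have hBA := h.condEntropy_pi_of_condMutualInfo_eq_zero hS hA hB hCI
  have hBAS := condEntropy_prod_eq_of_condMutualInfo_eq_zero (hB j) hS (hA j) hCI
  simp only [condEntropy, mutualInfo, condMutualInfo] at hBS hBA hBAS ⊢
  linear_combination hBS - hBA + Fintype.card ι * hBAS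

end

end IsCondIID

section PredictiveLoss

variable {α : Type*} {M T : ℕ}

/-- `Q_{m',t}(h)(h m' t)`: the `ν`-conditional probability that token `(m', t)` equals
`h m' t`, given the tokens of `h` before it. -/
noncomputable def predictiveProb [MeasurableSpace α] (ν : Measure (Fin M → Fin T → α))
    (m' : Fin M) (t : Fin T) (h : Fin M → Fin T → α) : ℝ :=
  (ν {g | ((∀ j : Fin M, j < m' → ∀ s : Fin T, g j s = h j s) ∧
      (∀ s : Fin T, s < t → g m' s = h m' s)) ∧ g m' t = h m' t}).toReal /
    (ν {g | (∀ j : Fin M, j < m' → ∀ s : Fin T, g j s = h j s) ∧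
      (∀ s : Fin T, s < t → g m' s = h m' s)}).toReal

def rowsAgree (h : Fin M → Fin T → α) (n : ℕ) : Set (Fin M → Fin T → α) :=
  {g | ∀ j : Fin M, (j : ℕ) < n → ∀ s, g j s = h j s}

def prefixAgree (h : Fin M → Fin T → α) (m' : Fin M) (n : ℕ) : Set (Fin M → Fin T → α) :=
  {g | (∀ j : Fin M, j < m' → ∀ s : Fin T, g j s = h j s) ∧
    ∀ s : Fin T, (s : ℕ) < n → g m' s = h m' s}

lemma mem_prefixAgree (h : Fin M → Fin T → α) (m' : Fin M) (n : ℕ) : h ∈ prefixAgree h m' n :=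
  ⟨fun _ _ _ => rfl, fun _ _ => rfl⟩

lemma prefixAgree_zero (h : Fin M → Fin T → α) (m' : Fin M) :
    prefixAgree h m' 0 = rowsAgree h m' :=
  Set.ext fun _ => ⟨fun hg => hg.1, fun hg => ⟨hg, fun _ hs => absurd hs (Nat.not_lt_zero _)⟩⟩

lemma prefixAgree_self (h : Fin M → Fin T → α) (m' : Fin M) :
    prefixAgree h m' T = rowsAgree h (m' + 1) := by
  ext g
  constructor
  · rintro ⟨hrows, hrow⟩ j hj s
    rcases Nat.lt_succ_iff_lt_or_eq.mp hj with hj | hj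
    · exact hrows j hj s
    · rw [Fin.ext hj]
      exact hrow s s.isLt
  · intro hg
    exact ⟨fun j hj => hg j (Nat.lt_succ_of_lt hj), fun s _ => hg m' (Nat.lt_succ_self _) s⟩

lemma rowsAgree_zero (h : Fin M → Fin T → α) : rowsAgree h 0 = Set.univ := by
  simp [rowsAgree]

lemma rowsAgree_self (h : Fin M → Fin T → α) : rowsAgree h M = {h} := by
  ext g
  simp [rowsAgree, funext_iff]

lemma predictiveProb_eq [MeasurableSpace α] (ν : Measure (Fin M → Fin T → α)) (m' : Fin M)
    (t : Fin T) (h : Fin M → Fin T → α) :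
    predictiveProb ν m' t h
      = (ν (prefixAgree h m' (t + 1))).toReal / (ν (prefixAgree h m' t)).toReal := by
  have hnext : {g | ((∀ j : Fin M, j < m' → ∀ s : Fin T, g j s = h j s) ∧
      (∀ s : Fin T, s < t → g m' s = h m' s)) ∧ g m' t = h m' t} = prefixAgree h m' (t + 1) := by
    ext g
    constructor
    · rintro ⟨⟨hrows, hrow⟩, ht⟩
      refine ⟨hrows, fun s hs => ?_⟩
      rcases Nat.lt_succ_iff_lt_or_eq.mp hs with hs | hs
      · exact hrow s hs
      · rwa [Fin.ext hs]
    · rintro ⟨hrows, hrow⟩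
      exact ⟨⟨hrows, fun s hs => hrow s (Nat.lt_succ_of_lt hs)⟩, hrow t (Nat.lt_succ_self _)⟩
  rw [predictiveProb, hnext]
  rfl

/-- The chain rule for `ν`: the sum telescopes within each row and then over the rows. -/
lemma sum_neg_log_predictiveProb [MeasurableSpace α] (ν : Measure (Fin M → Fin T → α))
    [IsProbabilityMeasure ν] {h : Fin M → Fin T → α} (hh : ν {h} ≠ 0) :
    ∑ m', ∑ t, -log (predictiveProb ν m' t h) = -log (ν {h}).toReal := by
  set L : Set (Fin M → Fin T → α) → ℝ := fun A => log (ν A).toReal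
  have hpos (m' : Fin M) (n : ℕ) : (ν (prefixAgree h m' n)).toReal ≠ 0 :=
    ENNReal.toReal_ne_zero.mpr ⟨fun h0 => hh (measure_mono_null
      (Set.singleton_subset_iff.mpr (mem_prefixAgree h m' n)) h0), measure_ne_top _ _⟩
  have hrow (m' : Fin M) : ∑ t : Fin T, -log (predictiveProb ν m' t h)
      = L (rowsAgree h m') - L (rowsAgree h (m' + 1)) := by
    simp_rw [predictiveProb_eq, log_div (hpos _ _) (hpos _ _), neg_sub]
    rw [Fin.sum_univ_eq_sum_range (fun n => L (prefixAgree h m' n) - L (prefixAgree h m' (n + 1))),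
      Finset.sum_range_sub', prefixAgree_zero, prefixAgree_self]
  simp_rw [hrow]
  rw [Fin.sum_univ_eq_sum_range (fun n => L (rowsAgree h n) - L (rowsAgree h (n + 1))),
    Finset.sum_range_sub', rowsAgree_zero, rowsAgree_self]
  simp [L]

theorem sum_integral_neg_log_predictiveProb [IsFiniteMeasure (ℙ : Measure Ω)] [Fintype α]
    [MeasurableSpace α] [MeasurableSingletonClass α] {X : Fin M → Fin T → Ω → α}
    (hX : ∀ m t, Measurable (X m t)) (ν : Measure (Fin M → Fin T → α)) [IsProbabilityMeasure ν]
    (hsupp : ∀ h, 0 < prob (fun ω m' t => X m' t ω) h → 0 < ν {h}) :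
    ∑ m', ∑ t, ∫ ω, -log (predictiveProb ν m' t fun j s => X j s ω) ∂ℙ
      = entropy (fun ω m' t => X m' t ω)
        + klFin (fun h => prob (fun ω m' t => X m' t ω) h) (fun h => (ν {h}).toReal) := by
  set H : Ω → Fin M → Fin T → α := fun ω m' t => X m' t ω
  have hH : Measurable H := measurable_pi_lambda _ fun m' => measurable_pi_lambda _ (hX m')
  calc _ = ∑ m', ∑ t, ∑ h, prob H h * -log (predictiveProb ν m' t h) :=
        Finset.sum_congr rfl fun m' _ => Finset.sum_congr rfl fun t _ =>
          integral_comp_eq_sum hH fun h => -log (predictiveProb ν m' t h)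
    _ = ∑ h, prob H h * ∑ m', ∑ t, -log (predictiveProb ν m' t h) := by
        simp_rw [Finset.mul_sum]
        conv_rhs => rw [Finset.sum_comm]
        exact Finset.sum_congr rfl fun m' _ => Finset.sum_comm
    _ = ∑ h, prob H h * -log (ν {h}).toReal := by
        refine Finset.sum_congr rfl fun h _ => ?_
        rcases eq_or_ne (prob H h) 0 with hp | hp
        · rw [hp, zero_mul, zero_mul]
        · rw [sum_neg_log_predictiveProb ν (hsupp h ((prob_nonneg _ _).lt_of_ne' hp)).ne']
    _ = _ := by
        rw [entropy, klFin, ← Finset.sum_neg_distrib, ← Finset.sum_add_distrib]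
        refine Finset.sum_congr rfl fun h _ => ?_
        rcases eq_or_ne (prob H h) 0 with hp | hp
        · simp [hp]
        · rw [log_div hp (ENNReal.toReal_pos
            (hsupp h ((prob_nonneg _ _).lt_of_ne' hp)).ne' (measure_ne_top _ _)).ne']
          ring

end PredictiveLoss

theorem misspecified_prior_full_loss_general
    {Ω : Type*} [MeasureSpace Ω] [IsProbabilityMeasure (ℙ : Measure Ω)]
    {𝒳 Θ Ψ : Type*} [Fintype 𝒳] [Fintype Θ]
    [Fintype Ψ]
    [MeasurableSpace 𝒳] [MeasurableSingletonClass 𝒳]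
    [MeasurableSpace Θ] [MeasurableSingletonClass Θ]
    [MeasurableSpace Ψ] [MeasurableSingletonClass Ψ]
    (M T : ℕ)
    (ψ : Ω → Ψ) (θ : Fin M → Ω → Θ) (X : Fin M → Fin T → Ω → 𝒳)
    (hψ : Measurable ψ) (hθ : ∀ m, Measurable (θ m)) (hX : ∀ m t, Measurable (X m t))
    -- (i) conditioned on ψ, the pairs (θ_m, D_m) are i.i.d.
    (hiid : ∃ κ : Ψ → Θ × (Fin T → 𝒳) → ℝ,
      (∀ s u, 0 ≤ κ s u) ∧ (∀ s, ∑ u, κ s u = 1) ∧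
      ∀ (s : Ψ) (v : Fin M → Θ × (Fin T → 𝒳)),
        prob (fun ω => (ψ ω, fun m => (θ m ω, fun t => X m t ω))) (s, v)
          = prob ψ s * ∏ m, κ s (v m))
    -- (ii) the meta-parameter carries no extra information about D_m beyond θ_m
    (hCI : ∀ m : Fin M, condMutualInfo (fun ω (t : Fin T) => X m t ω) ψ (θ m) = 0)
    (m : Fin M)
    (ν : Measure (Fin M → Fin T → 𝒳)) [IsProbabilityMeasure ν]
    (hsupp : ∀ h : Fin M → Fin T → 𝒳,
      0 < prob (fun ω (m' : Fin M) (t : Fin T) => X m' t ω) h → 0 < ν {h}) :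
    (1 / ((M : ℝ) * T)) * ∑ m' : Fin M, ∑ t : Fin T,
        ∫ ω, -Real.log
          ((ν {g : Fin M → Fin T → 𝒳 |
                ((∀ j : Fin M, j < m' → ∀ s : Fin T, g j s = X j s ω) ∧
                 (∀ s : Fin T, s < t → g m' s = X m' s ω)) ∧
                g m' t = X m' t ω}).toReal /
           (ν {g : Fin M → Fin T → 𝒳 |
                (∀ j : Fin M, j < m' → ∀ s : Fin T, g j s = X j s ω) ∧
                (∀ s : Fin T, s < t → g m' s = X m' s ω)}).toReal) ∂ℙ
      = condEntropy (fun ω (m' : Fin M) (t : Fin T) => X m' t ω)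
          (fun ω (m' : Fin M) => θ m' ω) / ((M : ℝ) * T)
        + mutualInfo (fun ω (m' : Fin M) (t : Fin T) => X m' t ω) ψ / ((M : ℝ) * T)
        + condMutualInfo (fun ω (t : Fin T) => X m t ω) (θ m) ψ / T
        + klFin (fun h => prob (fun ω (m' : Fin M) (t : Fin T) => X m' t ω) h)
            (fun h => (ν {h}).toReal) / ((M : ℝ) * T) := by
  obtain ⟨κ, -, hκ, hlaw⟩ := hiid
  have hD (k : Fin M) : Measurable fun ω (t : Fin T) => X k t ω := measurable_pi_lambda _ (hX k)
  have hdecomp : entropy (fun ω (m' : Fin M) (t : Fin T) => X m' t ω)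
      = condEntropy (fun ω (m' : Fin M) (t : Fin T) => X m' t ω) (fun ω (m' : Fin M) => θ m' ω)
        + mutualInfo (fun ω (m' : Fin M) (t : Fin T) => X m' t ω) ψ
        + M * condMutualInfo (fun ω (t : Fin T) => X m t ω) (θ m) ψ := by
    have h := (IsCondIID.mk hκ hlaw : IsCondIID ψ (fun k ω => (θ k ω, fun t => X k t ω)) κ
      ).entropy_pi_eq hψ hθ hD m (hCI m)
    rwa [Fintype.card_fin] at h
  have hloss := sum_integral_neg_log_predictiveProb hX ν hsupp
  simp only [predictiveProb] at hloss
  rw [hloss, hdecomp]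
  have hM : (M : ℝ) ≠ 0 := Nat.cast_ne_zero.mpr m.pos.ne'
  rcases eq_or_ne (T : ℝ) 0 with hT | hT
  · simp [hT]
  · field_simp

/-- **Full loss of a misspecified-prior predictor** (paper, appendix Corollary).
Under the meta-learning data generating assumptions, let `ν` be an alternative law on the
token array `(𝒳^T)^M` whose singletons dominate the true law of `H_{M,T}`, and let the
predictor at each `(m', t)` be the `ν`-conditional law of the next token given the realized
history `H_{m',t}`.  Then its average expected log-loss equals
`H[H_{M,T}|θ_{1:M}]/(MT) + I[H_{M,T};ψ]/(MT) + I[D_m;θ_m|ψ]/T + d_KL(law(H_{M,T}) ‖ ν)/(MT)`. -/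
theorem misspecified_prior_full_loss
    {Ω : Type*} [MeasureSpace Ω] [IsProbabilityMeasure (ℙ : Measure Ω)]
    {𝒳 Θ Ψ : Type*} [Fintype 𝒳] [Nonempty 𝒳] [Fintype Θ] [Nonempty Θ]
    [Fintype Ψ] [Nonempty Ψ]
    [MeasurableSpace 𝒳] [MeasurableSingletonClass 𝒳]
    [MeasurableSpace Θ] [MeasurableSingletonClass Θ]
    [MeasurableSpace Ψ] [MeasurableSingletonClass Ψ]
    (M T : ℕ) (hM : 1 ≤ M) (hT : 1 ≤ T)
    (ψ : Ω → Ψ) (θ : Fin M → Ω → Θ) (X : Fin M → Fin T → Ω → 𝒳)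
    (hψ : Measurable ψ) (hθ : ∀ m, Measurable (θ m)) (hX : ∀ m t, Measurable (X m t))
    -- (i) conditioned on ψ, the pairs (θ_m, D_m) are i.i.d.
    (hiid : ∃ κ : Ψ → Θ × (Fin T → 𝒳) → ℝ,
      (∀ s u, 0 ≤ κ s u) ∧ (∀ s, ∑ u, κ s u = 1) ∧
      ∀ (s : Ψ) (v : Fin M → Θ × (Fin T → 𝒳)),
        prob (fun ω => (ψ ω, fun m => (θ m ω, fun t => X m t ω))) (s, v)
          = prob ψ s * ∏ m, κ s (v m))
    -- (ii) the meta-parameter carries no extra information about D_m beyond θ_m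
    (hCI : ∀ m : Fin M, condMutualInfo (fun ω (t : Fin T) => X m t ω) ψ (θ m) = 0)
    (m : Fin M)
    (ν : Measure (Fin M → Fin T → 𝒳)) [IsProbabilityMeasure ν]
    (hsupp : ∀ h : Fin M → Fin T → 𝒳,
      0 < prob (fun ω (m' : Fin M) (t : Fin T) => X m' t ω) h → 0 < ν {h}) :
    (1 / ((M : ℝ) * T)) * ∑ m' : Fin M, ∑ t : Fin T,
        ∫ ω, -Real.log
          ((ν {g : Fin M → Fin T → 𝒳 |
                ((∀ j : Fin M, j < m' → ∀ s : Fin T, g j s = X j s ω) ∧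
                 (∀ s : Fin T, s < t → g m' s = X m' s ω)) ∧
                g m' t = X m' t ω}).toReal /
           (ν {g : Fin M → Fin T → 𝒳 |
                (∀ j : Fin M, j < m' → ∀ s : Fin T, g j s = X j s ω) ∧
                (∀ s : Fin T, s < t → g m' s = X m' s ω)}).toReal) ∂ℙ
      = condEntropy (fun ω (m' : Fin M) (t : Fin T) => X m' t ω)
          (fun ω (m' : Fin M) => θ m' ω) / ((M : ℝ) * T)
        + mutualInfo (fun ω (m' : Fin M) (t : Fin T) => X m' t ω) ψ / ((M : ℝ) * T)
        + condMutualInfo (fun ω (t : Fin T) => X m t ω) (θ m) ψ / T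
        + klFin (fun h => prob (fun ω (m' : Fin M) (t : Fin T) => X m' t ω) h)
            (fun h => (ν {h}).toReal) / ((M : ℝ) * T) :=
  misspecified_prior_full_loss_general M T ψ θ X hψ hθ hX hiid hCI m ν hsupp
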